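/- arXiv:1212.0417 — 2 statements merged into one kernel-verified Lean document; each statement's English description precedes it below -/
import Mathlib

section
/- Suppose v* ∈ ℝⁿ with ‖v*‖₂ = 1, J(v*) − σI is invertible, and φ(v*) = ε v* for some sign ε ∈ {+1, −1}. Then (λ*, v*) is an eigenpair, i.e. A(v*)v* = λ* v*, where λ* := σ + ε/‖(J(v*) − σI)⁻¹v*‖₂; moreover λ* = v*ᵀA(v*)v*. -/
open Matrix Asymptotics Topology
open scoped RealInnerProductSpace

noncomputable def mvCLM {ι : Type*} [Fintype ι] [DecidableEq ι] (M : Matrix ι ι ℝ) :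
    EuclideanSpace ℝ ι →L[ℝ] EuclideanSpace ℝ ι :=
  LinearMap.toContinuousLinearMap (Matrix.toEuclideanLin M)

noncomputable def invitPsi {n : ℕ} (J : EuclideanSpace ℝ (Fin n) → Matrix (Fin n) (Fin n) ℝ)
    (σ : ℝ) (v : EuclideanSpace ℝ (Fin n)) : EuclideanSpace ℝ (Fin n) :=
  mvCLM ((J v - σ • 1)⁻¹) v

noncomputable def invitPhi {n : ℕ} (J : EuclideanSpace ℝ (Fin n) → Matrix (Fin n) (Fin n) ℝ)
    (σ : ℝ) (v : EuclideanSpace ℝ (Fin n)) : EuclideanSpace ℝ (Fin n) :=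
  ‖invitPsi J σ v‖⁻¹ • invitPsi J σ v

noncomputable def rayQuot {n : ℕ} (A : EuclideanSpace ℝ (Fin n) → Matrix (Fin n) (Fin n) ℝ)
    (v : EuclideanSpace ℝ (Fin n)) : ℝ :=
  ⟪v, mvCLM (A v) v⟫ / ⟪v, v⟫

/-!
Differentiating `A(t v) (t v) = t A(v) v` at `t = 1` gives Euler's identity `J(v) v = A(v) v`
for the scaling-invariant `A`. Hence `J(v*) − σI` acts on `v*` as `A(v*) − σI`. On the other
hand `φ(v*) = ε v*` says `ψ(v*) = ε ‖ψ(v*)‖ v*`, and applying `J(v*) − σI` to this gives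
`(J(v*) − σI) v* = (ε / ‖ψ(v*)‖) v*` because `ε² = 1`. Together, `A(v*) v* = λ* v*`, and
pairing with the unit vector `v*` yields `λ* = v*ᵀ A(v*) v*`.
-/

section mvCLM

variable {ι : Type*} [Fintype ι] [DecidableEq ι]

lemma mvCLM_mul_apply (M N : Matrix ι ι ℝ) (x : EuclideanSpace ℝ ι) :
    mvCLM (M * N) x = mvCLM M (mvCLM N x) := by
  simp [mvCLM]

lemma mvCLM_sub_smul_one_apply (M : Matrix ι ι ℝ) (σ : ℝ) (x : EuclideanSpace ℝ ι) :
    mvCLM (M - σ • 1) x = mvCLM M x - σ • x := by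
  simp [mvCLM]

lemma mvCLM_apply_mvCLM_inv {M : Matrix ι ι ℝ} (hM : IsUnit M) (x : EuclideanSpace ℝ ι) :
    mvCLM M (mvCLM M⁻¹ x) = x := by
  rw [← mvCLM_mul_apply, Matrix.mul_nonsing_inv M ((Matrix.isUnit_iff_isUnit_det M).mp hM)]
  simp [mvCLM]

end mvCLM

lemma HasFDerivAt.apply_self_eq_of_homogeneous {E F : Type*} [NormedAddCommGroup E]
    [NormedSpace ℝ E] [NormedAddCommGroup F] [NormedSpace ℝ F] {f : E → F} {f' : E →L[ℝ] F}
    {v : E} (hf : HasFDerivAt f f' v) (hhom : ∀ᶠ t : ℝ in 𝓝 1, f (t • v) = t • f v) :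
    f' v = f v := by
  have hray : HasDerivAt (fun t : ℝ => t • v) v 1 := by
    simpa using (hasDerivAt_id (1 : ℝ)).smul_const v
  have hcomp : HasDerivAt (fun t : ℝ => f (t • v)) (f' v) 1 := by
    rw [← one_smul ℝ v] at hf
    exact hf.comp_hasDerivAt 1 hray
  have hlin : HasDerivAt (fun t : ℝ => t • f v) (f v) 1 := by
    simpa using (hasDerivAt_id (1 : ℝ)).smul_const (f v)
  exact (hcomp.congr_of_eventuallyEq (Filter.EventuallyEq.symm hhom)).unique hlin

lemma jacobian_apply_self_of_scale_invariant {n : ℕ}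
    {A J : EuclideanSpace ℝ (Fin n) → Matrix (Fin n) (Fin n) ℝ}
    (hscale : ∀ α : ℝ, α ≠ 0 → ∀ v : EuclideanSpace ℝ (Fin n), v ≠ 0 → A (α • v) = A v)
    {v : EuclideanSpace ℝ (Fin n)} (hv : v ≠ 0)
    (hJ : HasFDerivAt (fun w => mvCLM (A w) w) (mvCLM (J v)) v) :
    mvCLM (J v) v = mvCLM (A v) v := by
  refine hJ.apply_self_eq_of_homogeneous ?_
  filter_upwards [eventually_ne_nhds (one_ne_zero (α := ℝ))] with t ht
  rw [hscale t ht v hv, map_smul]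

lemma shifted_apply_eq_smul_of_invitPhi_eq_smul {n : ℕ}
    {J : EuclideanSpace ℝ (Fin n) → Matrix (Fin n) (Fin n) ℝ} {σ ε : ℝ}
    {v : EuclideanSpace ℝ (Fin n)} (hv : v ≠ 0) (hinv : IsUnit (J v - σ • 1))
    (hε : ε * ε = 1) (hfix : invitPhi J σ v = ε • v) :
    mvCLM (J v - σ • 1) v = (ε / ‖invitPsi J σ v‖) • v := by
  set ψ := invitPsi J σ v
  have hBψ : mvCLM (J v - σ • 1) ψ = v := mvCLM_apply_mvCLM_inv hinv v
  have hψ : ‖ψ‖ ≠ 0 := by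
    rw [norm_ne_zero_iff]
    rintro h
    rw [h, map_zero] at hBψ
    exact hv hBψ.symm
  have hψ_eq : ψ = (‖ψ‖ * ε) • v := by
    rw [mul_smul, ← hfix, invitPhi, smul_smul, mul_inv_cancel₀ hψ, one_smul]
  calc mvCLM (J v - σ • 1) v
      = ((ε / ‖ψ‖) * (‖ψ‖ * ε)) • mvCLM (J v - σ • 1) v := by
        rw [show ε / ‖ψ‖ * (‖ψ‖ * ε) = ε * ε by field_simp, hε, one_smul]
    _ = (ε / ‖ψ‖) • v := by rw [mul_smul, ← map_smul, ← hψ_eq, hBψ]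

theorem stmt5_general {n : ℕ}
    (A J : EuclideanSpace ℝ (Fin n) → Matrix (Fin n) (Fin n) ℝ)
    (hscale : ∀ α : ℝ, α ≠ 0 → ∀ v : EuclideanSpace ℝ (Fin n), v ≠ 0 → A (α • v) = A v)
    (hJ : ∀ v : EuclideanSpace ℝ (Fin n), v ≠ 0 →
      HasFDerivAt (fun w => mvCLM (A w) w) (mvCLM (J v)) v)
    (σ : ℝ) (vstar : EuclideanSpace ℝ (Fin n)) (hnorm : ‖vstar‖ = 1)
    (hinv : IsUnit (J vstar - σ • (1 : Matrix (Fin n) (Fin n) ℝ)))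
    (ε : ℝ) (hε : ε = 1 ∨ ε = -1)
    (hfix : invitPhi J σ vstar = ε • vstar)
    (lam : ℝ)
    (hlam : lam = σ + ε / ‖mvCLM ((J vstar - σ • 1)⁻¹) vstar‖) :
    mvCLM (A vstar) vstar = lam • vstar ∧ lam = ⟪vstar, mvCLM (A vstar) vstar⟫ := by
  have hv : vstar ≠ 0 := norm_ne_zero_iff.mp (by rw [hnorm]; exact one_ne_zero)
  have hε_sq : ε * ε = 1 := by rcases hε with rfl | rfl <;> norm_num
  have hshift := shifted_apply_eq_smul_of_invitPhi_eq_smul hv hinv hε_sq hfix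
  rw [mvCLM_sub_smul_one_apply, jacobian_apply_self_of_scale_invariant hscale hv (hJ vstar hv),
    sub_eq_iff_eq_add] at hshift
  have heig : mvCLM (A vstar) vstar = lam • vstar := by
    rw [hshift, hlam, add_smul, add_comm, invitPsi]
  refine ⟨heig, ?_⟩
  rw [heig, real_inner_smul_right, real_inner_self_eq_norm_sq, hnorm, one_pow, mul_one]

/-- If `‖v*‖ = 1`, `J(v*) − σI` is invertible and `φ(v*) = ε v*`
with `ε ∈ {+1, −1}`, then `(λ*, v*)` is an eigenpair of `A`, where
`λ* = σ + ε/‖(J(v*) − σI)⁻¹v*‖`; moreover `λ* = v*ᵀ A(v*) v*`. -/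
theorem stmt5 {n : ℕ} (hn : 1 ≤ n)
    (A J : EuclideanSpace ℝ (Fin n) → Matrix (Fin n) (Fin n) ℝ)
    (hsymm : ∀ v : EuclideanSpace ℝ (Fin n), v ≠ 0 → (A v).IsSymm)
    (hsmooth : ContDiffOn ℝ 1 (fun w i j => A w i j) {(0 : EuclideanSpace ℝ (Fin n))}ᶜ)
    (hscale : ∀ α : ℝ, α ≠ 0 → ∀ v : EuclideanSpace ℝ (Fin n), v ≠ 0 → A (α • v) = A v)
    (hJ : ∀ v : EuclideanSpace ℝ (Fin n), v ≠ 0 →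
      HasFDerivAt (fun w => mvCLM (A w) w) (mvCLM (J v)) v)
    (σ : ℝ) (vstar : EuclideanSpace ℝ (Fin n)) (hnorm : ‖vstar‖ = 1)
    (hinv : IsUnit (J vstar - σ • (1 : Matrix (Fin n) (Fin n) ℝ)))
    (ε : ℝ) (hε : ε = 1 ∨ ε = -1)
    (hfix : invitPhi J σ vstar = ε • vstar)
    (lam : ℝ)
    (hlam : lam = σ + ε / ‖mvCLM ((J vstar - σ • 1)⁻¹) vstar‖) :
    mvCLM (A vstar) vstar = lam • vstar ∧ lam = ⟪vstar, mvCLM (A vstar) vstar⟫ :=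
  stmt5_general A J hscale hJ σ vstar hnorm hinv ε hε hfix lam hlam
end

section
/- Assume A is twice continuously differentiable on ℝⁿ∖{0}. Suppose (λ*, v*) is an eigenpair with ‖v*‖₂ = 1, σ ≠ λ*, and J(v*) − σI is invertible. Then φ is differentiable at v* and its Fréchet derivative is given by the matrix φ'(v*) = |λ* − σ| (I − v*v*ᵀ)(J(v*) − σI)⁻¹. -/
open Matrix Asymptotics Topology
open scoped RealInnerProductSpace

/-!
Scale invariance of `A` makes `v ↦ A(v)v` homogeneous of degree one, so Euler's identity gives
`J(v)v = A(v)v` for `v ≠ 0`. Differentiating this identity at `v*` (possible because `A` is `C²`)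
shows `J'(v*)[h] v* = 0`. In `ψ(v) = (J(v) − σI)⁻¹ v` the variation of the inverse contributes
`−P J'(v*)[h] P v*` with `P = (J(v*) − σI)⁻¹`, and this vanishes because `P v* = v*/(λ* − σ)`;
hence `ψ'(v*) = P`. Finally `x ↦ x/‖x‖` has derivative `|a|⁻¹ (I − uuᵀ)` at `a u` with `‖u‖ = 1`.
-/

open scoped Ring

theorem map_ringInverse {R S F : Type*} [Semiring R] [Semiring S] [EquivLike F R S]
    [RingEquivClass F R S] (e : F) (x : R) : e x⁻¹ʳ = (e x)⁻¹ʳ := by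
  by_cases hx : IsUnit x
  · calc e x⁻¹ʳ = (e x)⁻¹ʳ * (e x * e x⁻¹ʳ) := by
          rw [Ring.inverse_mul_cancel_left _ _ (hx.map e)]
      _ = (e x)⁻¹ʳ := by rw [← map_mul, Ring.mul_inverse_cancel x hx, map_one, mul_one]
  · rw [Ring.inverse_non_unit _ hx, Ring.inverse_non_unit _ (by rwa [isUnit_map_iff]), map_zero]

section Normalization

variable {F : Type*} [NormedAddCommGroup F] [InnerProductSpace ℝ F]

theorem hasFDerivAt_norm_of_ne_zero {x : F} (hx : x ≠ 0) :
    HasFDerivAt (‖·‖) (‖x‖⁻¹ • innerSL ℝ x) x := by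
  have hsq := (hasStrictFDerivAt_norm_sq x).hasFDerivAt.sqrt (by positivity)
  simp only [Real.sqrt_sq (norm_nonneg _)] at hsq
  convert hsq using 1
  ext y
  simp only [_root_.smul_apply, coe_innerSL_apply, smul_eq_mul, one_div, nsmul_eq_mul,
    Nat.cast_ofNat]
  field_simp

theorem hasFDerivAt_inv_norm_smul_self {x : F} (hx : x ≠ 0) :
    HasFDerivAt (fun y : F => ‖y‖⁻¹ • y)
      (‖x‖⁻¹ • (ContinuousLinearMap.id ℝ F - (‖x‖ ^ 2)⁻¹ • (innerSL ℝ x).smulRight x)) x := by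
  have hnx : ‖x‖ ≠ 0 := norm_ne_zero_iff.mpr hx
  have hinv := (hasDerivAt_inv hnx).comp_hasFDerivAt x (hasFDerivAt_norm_of_ne_zero hx)
  refine (hinv.smul (hasFDerivAt_id x)).congr_fderiv ?_
  ext y
  simp only [_root_.add_apply, _root_.smul_apply, _root_.sub_apply,
    ContinuousLinearMap.smulRight_apply, innerSL_apply_apply, ContinuousLinearMap.id_apply,
    Function.comp_apply, id, smul_eq_mul]
  match_scalars <;> field_simp

theorem hasFDerivAt_inv_norm_smul_self_smul {u : F} (hu : ‖u‖ = 1) {a : ℝ} (ha : a ≠ 0) :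
    HasFDerivAt (fun y : F => ‖y‖⁻¹ • y)
      (|a|⁻¹ • (ContinuousLinearMap.id ℝ F - (innerSL ℝ u).smulRight u)) (a • u) := by
  have hu0 : u ≠ 0 := by rintro rfl; simp at hu
  convert hasFDerivAt_inv_norm_smul_self (smul_ne_zero ha hu0) using 1
  ext y
  simp only [_root_.smul_apply, _root_.sub_apply, ContinuousLinearMap.id_apply,
    ContinuousLinearMap.smulRight_apply, coe_innerSL_apply, norm_smul, Real.norm_eq_abs, hu,
    mul_one, sq_abs, map_smul, smul_eq_mul]
  match_scalars <;> field_simp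

end Normalization

section Calculus

variable {E F : Type*} [NormedAddCommGroup E] [NormedSpace ℝ E]
  [NormedAddCommGroup F] [NormedSpace ℝ F]

theorem HasFDerivAt.apply_self_of_homogeneous {f : E → F} {f' : E →L[ℝ] F} {v : E}
    (hf : HasFDerivAt f f' v) (hhom : (fun α : ℝ => f (α • v)) =ᶠ[𝓝 1] fun α => α • f v) :
    f' v = f v := by
  have hline : HasDerivAt (fun α : ℝ => α • v) v 1 := by
    simpa using (hasDerivAt_id (1 : ℝ)).smul_const v
  have hcomp : HasDerivAt (fun α : ℝ => f (α • v)) (f' v) 1 :=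
    (one_smul ℝ v ▸ hf).comp_hasDerivAt 1 hline
  have hray : HasDerivAt (fun α : ℝ => α • f v) (f v) 1 := by
    simpa using (hasDerivAt_id (1 : ℝ)).smul_const (f v)
  exact (hcomp.congr_of_eventuallyEq hhom.symm).unique hray

theorem differentiableAt_of_hasFDerivAt_of_contDiffOn {f : E → F} {T : E → E →L[ℝ] F}
    {s : Set E} {x : E} (hs : IsOpen s) (hf : ContDiffOn ℝ 2 f s)
    (hT : ∀ y ∈ s, HasFDerivAt f (T y) y) (hx : x ∈ s) : DifferentiableAt ℝ T x := by
  have hf' : ContDiffOn ℝ 1 (fderiv ℝ f) s := hf.fderiv_of_isOpen hs (by norm_num)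
  refine ((hf'.differentiableOn one_ne_zero x hx).differentiableAt (hs.mem_nhds hx))
    |>.congr_of_eventuallyEq ?_
  filter_upwards [hs.mem_nhds hx] with y hy using (hT y hy).fderiv.symm

theorem apply_eq_zero_of_hasFDerivAt_of_eventuallyEq_apply_self {f : E → F} {T : E → E →L[ℝ] F}
    {T' : E →L[ℝ] E →L[ℝ] F} {x : E} (hf : HasFDerivAt f (T x) x) (hT : HasFDerivAt T T' x)
    (heq : (fun y => T y y) =ᶠ[𝓝 x] f) (h : E) : T' h x = 0 := by
  have hprod := (hT.clm_apply (hasFDerivAt_id x)).congr_of_eventuallyEq heq.symm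
  have := congrArg (fun L : E →L[ℝ] F => L h) (hprod.unique hf)
  simpa using this

end Calculus

section ShiftedInverse

variable {E : Type*} [NormedAddCommGroup E] [NormedSpace ℝ E]

theorem ringInverse_sub_smul_one_apply_of_apply_eq_smul {T : E →L[ℝ] E} {x : E} {μ σ : ℝ}
    (hu : IsUnit (T - σ • 1)) (heig : T x = μ • x) : (T - σ • 1)⁻¹ʳ x = (μ - σ)⁻¹ • x := by
  have hshift : (T - σ • 1) x = (μ - σ) • x := by simp [heig, sub_smul]
  have hx : x = (μ - σ) • (T - σ • 1)⁻¹ʳ x := by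
    rw [← map_smul, ← hshift, ← mul_apply_eq_comp, Ring.inverse_mul_cancel _ hu,
      one_apply_eq_self]
  by_cases hμ : μ - σ = 0
  · rw [hμ, zero_smul] at hx
    rw [hx, map_zero, smul_zero]
  · rw [hx, smul_smul, inv_mul_cancel₀ hμ, one_smul, ← hx]

theorem hasFDerivAt_ringInverse_sub_smul_one_apply_self [CompleteSpace E] {T : E → E →L[ℝ] E}
    {T' : E →L[ℝ] E →L[ℝ] E} {x : E} {μ σ : ℝ} (hT : HasFDerivAt T T' x)
    (hT'x : ∀ h, T' h x = 0) (hu : IsUnit (T x - σ • 1)) (heig : T x x = μ • x) :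
    HasFDerivAt (fun v => (T v - σ • 1)⁻¹ʳ v) (T x - σ • 1)⁻¹ʳ x := by
  have hinv : HasFDerivAt (fun v => (T v - σ • 1)⁻¹ʳ)
      ((-ContinuousLinearMap.mulLeftRight ℝ _ (T x - σ • 1)⁻¹ʳ (T x - σ • 1)⁻¹ʳ).comp T') x := by
    have h := hasFDerivAt_ringInverse (𝕜 := ℝ) hu.unit
    rw [hu.unit_spec, ← Ring.inverse_unit, hu.unit_spec] at h
    exact h.comp x (hT.sub_const _)
  refine (hinv.clm_apply (hasFDerivAt_id x)).congr_fderiv ?_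
  ext h
  simp [ringInverse_sub_smul_one_apply_of_apply_eq_smul hu heig, hT'x]

end ShiftedInverse

section EuclideanMatrix

variable {ι : Type*} [Fintype ι] [DecidableEq ι]

theorem mvCLM_eq_toEuclideanCLM (M : Matrix ι ι ℝ) :
    mvCLM M = Matrix.toEuclideanCLM (n := ι) (𝕜 := ℝ) M :=
  rfl

theorem mvCLM_sub_smul_one_inv (M : Matrix ι ι ℝ) (σ : ℝ) :
    mvCLM (M - σ • 1)⁻¹ = (mvCLM M - σ • 1)⁻¹ʳ := by
  simp only [mvCLM_eq_toEuclideanCLM, nonsing_inv_eq_ringInverse, map_ringInverse, map_sub,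
    map_smul, map_one]

theorem mvCLM_vecMulVec (u w : EuclideanSpace ℝ ι) :
    mvCLM (vecMulVec u w) = (innerSL ℝ w).smulRight u := by
  ext x i
  simp [mvCLM_eq_toEuclideanCLM, vecMulVec, PiLp.inner_apply, mulVec, dotProduct,
    Finset.mul_sum, mul_comm, mul_assoc]

theorem ContDiffOn.mvCLM {X : Type*} [NormedAddCommGroup X] [NormedSpace ℝ X]
    {A : X → Matrix ι ι ℝ} {s : Set X} {k : WithTop ℕ∞}
    (hA : ContDiffOn ℝ k (fun w i j => A w i j) s) : ContDiffOn ℝ k (fun w => mvCLM (A w)) s := by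
  let L : (ι → ι → ℝ) →L[ℝ] EuclideanSpace ℝ ι →L[ℝ] EuclideanSpace ℝ ι :=
    LinearMap.toContinuousLinearMap
      (Matrix.toEuclideanCLM (n := ι) (𝕜 := ℝ)).toAlgEquiv.toLinearMap
  exact L.contDiff.comp_contDiffOn hA

end EuclideanMatrix

theorem stmt8_general {n : ℕ}
    (A J : EuclideanSpace ℝ (Fin n) → Matrix (Fin n) (Fin n) ℝ)
    (hsmooth : ContDiffOn ℝ 2 (fun w i j => A w i j) {(0 : EuclideanSpace ℝ (Fin n))}ᶜ)
    (hscale : ∀ α : ℝ, α ≠ 0 → ∀ v : EuclideanSpace ℝ (Fin n), v ≠ 0 → A (α • v) = A v)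
    (hJ : ∀ v : EuclideanSpace ℝ (Fin n), v ≠ 0 →
      HasFDerivAt (fun w => mvCLM (A w) w) (mvCLM (J v)) v)
    (lam σ : ℝ) (vstar : EuclideanSpace ℝ (Fin n)) (hnorm : ‖vstar‖ = 1)
    (heig : mvCLM (A vstar) vstar = lam • vstar) (hσ : σ ≠ lam)
    (hinv : IsUnit (J vstar - σ • (1 : Matrix (Fin n) (Fin n) ℝ))) :
    HasFDerivAt (invitPhi J σ)
      (mvCLM (|lam - σ| •
        ((1 - Matrix.vecMulVec vstar vstar) * (J vstar - σ • 1)⁻¹))) vstar := by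
  have hv0 : vstar ≠ 0 := by rintro rfl; simp at hnorm
  have heuler : ∀ v, v ≠ 0 → mvCLM (J v) v = mvCLM (A v) v := fun v hv =>
    (hJ v hv).apply_self_of_homogeneous <| by
      filter_upwards [eventually_ne_nhds one_ne_zero] with α hα
      rw [hscale α hα v hv, map_smul]
  have hJdiff : DifferentiableAt ℝ (fun v => mvCLM (J v)) vstar :=
    differentiableAt_of_hasFDerivAt_of_contDiffOn isOpen_compl_singleton
      (hsmooth.mvCLM.clm_apply contDiffOn_id) hJ hv0
  have hJ'v := apply_eq_zero_of_hasFDerivAt_of_eventuallyEq_apply_self (hJ vstar hv0)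
    hJdiff.hasFDerivAt (by filter_upwards [eventually_ne_nhds hv0] with v hv using heuler v hv)
  have hJeig : mvCLM (J vstar) vstar = lam • vstar := (heuler vstar hv0).trans heig
  have hu : IsUnit (mvCLM (J vstar) - σ • 1) := by
    simpa [mvCLM_eq_toEuclideanCLM] using hinv.map (Matrix.toEuclideanCLM (n := Fin n) (𝕜 := ℝ))
  have hψ : invitPsi J σ = fun v => (mvCLM (J v) - σ • 1)⁻¹ʳ v := by
    funext v
    rw [invitPsi, mvCLM_sub_smul_one_inv]
  have hψv : invitPsi J σ vstar = (lam - σ)⁻¹ • vstar := by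
    rw [hψ]
    exact ringInverse_sub_smul_one_apply_of_apply_eq_smul hu hJeig
  have hψ' : HasFDerivAt (invitPsi J σ) (mvCLM (J vstar - σ • 1)⁻¹) vstar := by
    rw [hψ, mvCLM_sub_smul_one_inv]
    exact hasFDerivAt_ringInverse_sub_smul_one_apply_self hJdiff.hasFDerivAt hJ'v hu hJeig
  have hN := hasFDerivAt_inv_norm_smul_self_smul hnorm (inv_ne_zero (sub_ne_zero.2 hσ.symm))
  rw [← hψv] at hN
  have hφ : HasFDerivAt (invitPhi J σ) _ vstar := hN.comp vstar hψ'
  refine hφ.congr_fderiv ?_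
  symm
  rw [mvCLM_eq_toEuclideanCLM, map_smul, map_mul, map_sub, map_one, ← mvCLM_eq_toEuclideanCLM,
    mvCLM_vecMulVec, abs_inv, inv_inv]
  rfl

/-- If `A` is twice continuously differentiable on `ℝⁿ∖{0}`, `(λ*, v*)`
is an eigenpair with `‖v*‖ = 1`, `σ ≠ λ*`, and `J(v*) − σI` is invertible, then `φ` is
differentiable at `v*` with derivative `|λ* − σ| (I − v*v*ᵀ)(J(v*) − σI)⁻¹`. -/
theorem stmt8 {n : ℕ} (hn : 1 ≤ n)
    (A J : EuclideanSpace ℝ (Fin n) → Matrix (Fin n) (Fin n) ℝ)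
    (hsymm : ∀ v : EuclideanSpace ℝ (Fin n), v ≠ 0 → (A v).IsSymm)
    (hsmooth : ContDiffOn ℝ 2 (fun w i j => A w i j) {(0 : EuclideanSpace ℝ (Fin n))}ᶜ)
    (hscale : ∀ α : ℝ, α ≠ 0 → ∀ v : EuclideanSpace ℝ (Fin n), v ≠ 0 → A (α • v) = A v)
    (hJ : ∀ v : EuclideanSpace ℝ (Fin n), v ≠ 0 →
      HasFDerivAt (fun w => mvCLM (A w) w) (mvCLM (J v)) v)
    (lam σ : ℝ) (vstar : EuclideanSpace ℝ (Fin n)) (hnorm : ‖vstar‖ = 1)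
    (heig : mvCLM (A vstar) vstar = lam • vstar) (hσ : σ ≠ lam)
    (hinv : IsUnit (J vstar - σ • (1 : Matrix (Fin n) (Fin n) ℝ))) :
    HasFDerivAt (invitPhi J σ)
      (mvCLM (|lam - σ| •
        ((1 - Matrix.vecMulVec vstar vstar) * (J vstar - σ • 1)⁻¹))) vstar :=
  stmt8_general A J hsmooth hscale hJ lam σ vstar hnorm heig hσ hinv
end
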